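/- For all real numbers a, b > 0, K ∈ ℝ, l > 0 and λ ∈ (0,1), one has lim_{ε↓0} −(1/ε) · log[ (s_{−Kε}((1−λ)l)/s_{−Kε}(l)) · a^{−ε} + (s_{−Kε}(λl)/s_{−Kε}(l)) · b^{−ε} ] = (1−λ) log a + λ log b + (K/2)(1−λ)λ l². -/

import Mathlib

open Filter Topology

/-!
Write `F ε` for the argument of the logarithm. Since `s_0 r = r` and `a ^ 0 = b ^ 0 = 1` we have
`F 0 = 1`, so the expression is minus the difference quotient of `log ∘ F` at `0` and tends to
`-F' 0`. The only non-elementary input is `∂_κ s_κ(r) = -r³/6` at `κ = 0`: the fifth-order Taylor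
bounds for `sin` and `sinh` give `s_κ(r) = r - κ r³/6 + O(κ²)` on both sides of `κ = 0`. The
curvature term then comes from `(1 - λ)³ + λ³ - 1 = -3λ(1 - λ)`.
-/

/-- The comparison function `s_κ`: solution of `f'' + κ f = 0`, `f(0) = 0`, `f'(0) = 1`. -/
noncomputable def sk (κ r : ℝ) : ℝ :=
  if 0 < κ then Real.sin (Real.sqrt κ * r) / Real.sqrt κ
  else if κ = 0 then r
  else Real.sinh (Real.sqrt (-κ) * r) / Real.sqrt (-κ)

theorem Real.sinh_bound {x : ℝ} (hx : |x| ≤ 1) :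
    |Real.sinh x - (x + x ^ 3 / 6)| ≤ |x| ^ 5 / 100 := by
  have h := Complex.sin_bound (x := x * Complex.I) (by simpa using hx)
  have hrot : Complex.sin (x * Complex.I) - (x * Complex.I - (x * Complex.I) ^ 3 / 6) =
      ((Real.sinh x - (x + x ^ 3 / 6) : ℝ) : ℂ) * Complex.I := by
    rw [Complex.sin_mul_I]
    push_cast
    linear_combination ((x : ℂ) ^ 3 * Complex.I / 6) * Complex.I_sq
  rw [hrot] at h
  simpa only [norm_mul, Complex.norm_I, mul_one, Complex.norm_real, Real.norm_eq_abs] using h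

lemma abs_div_sqrt_sub_cubic_le {g : ℝ → ℝ} {c : ℝ}
    (hg : ∀ x, |x| ≤ 1 → |g x - (x + c * x ^ 3)| ≤ |x| ^ 5 / 100) {μ r : ℝ} (hμ : 0 < μ)
    (hr : μ * r ^ 2 ≤ 1) :
    |g (√μ * r) / √μ - (r + c * μ * r ^ 3)| ≤ μ ^ 2 * |r| ^ 5 / 100 := by
  have hs : 0 < √μ := Real.sqrt_pos.mpr hμ
  have hs2 : √μ ^ 2 = μ := Real.sq_sqrt hμ.le
  have hsr : |√μ * r| ≤ 1 := by
    rw [← sq_le_one_iff_abs_le_one, mul_pow, hs2]; exact hr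
  have hsplit : g (√μ * r) / √μ - (r + c * μ * r ^ 3) =
      (g (√μ * r) - (√μ * r + c * (√μ * r) ^ 3)) / √μ := by
    field_simp
    linear_combination (c * r ^ 3 * √μ) * hs2
  calc |g (√μ * r) / √μ - (r + c * μ * r ^ 3)|
      ≤ |√μ * r| ^ 5 / 100 / √μ := by
        rw [hsplit, abs_div, abs_of_pos hs]; gcongr; exact hg _ hsr
    _ = (√μ ^ 2) ^ 2 * |r| ^ 5 / 100 := by
        rw [abs_mul, abs_of_pos hs]; field_simp
    _ = μ ^ 2 * |r| ^ 5 / 100 := by rw [hs2]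

lemma tendsto_neg_inv_mul_log_of_hasDerivAt {f : ℝ → ℝ} {f' : ℝ} (hf : HasDerivAt f f' 0)
    (h0 : f 0 = 1) :
    Tendsto (fun ε => -(1 / ε) * Real.log (f ε)) (𝓝[>] 0) (𝓝 (-f')) := by
  have hslope := (hf.log (by simp [h0])).tendsto_slope_zero_right.neg
  simp only [h0, Real.log_one, div_one, zero_add, sub_zero, smul_eq_mul] at hslope
  refine hslope.congr fun ε => ?_
  ring

lemma hasDerivAt_rpow_neg {c : ℝ} (hc : 0 < c) (x : ℝ) :
    HasDerivAt (fun ε : ℝ => c ^ (-ε)) (-(c ^ (-x) * Real.log c)) x :=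
  ((hasDerivAt_neg x).const_rpow hc).congr_deriv (by ring)

@[simp]
lemma sk_zero (r : ℝ) : sk 0 r = r := by
  simp [sk]

lemma abs_sk_sub_le {κ r : ℝ} (h : |κ| * r ^ 2 ≤ 1) :
    |sk κ r - (r - κ * r ^ 3 / 6)| ≤ κ ^ 2 * |r| ^ 5 / 100 := by
  rcases lt_trichotomy κ 0 with hκ | rfl | hκ
  · have := abs_div_sqrt_sub_cubic_le (g := Real.sinh) (c := 1 / 6)
      (fun x hx => by convert Real.sinh_bound hx using 3; ring) (neg_pos.mpr hκ)
      (by rwa [abs_of_neg hκ] at h)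
    rw [sk, if_neg hκ.not_gt, if_neg hκ.ne]
    convert this using 3 <;> ring
  · simp
  · have := abs_div_sqrt_sub_cubic_le (g := Real.sin) (c := -1 / 6)
      (fun x hx => by convert Real.sin_bound hx using 3; ring) hκ
      (by rwa [abs_of_pos hκ] at h)
    rw [sk, if_pos hκ]
    convert this using 3; ring

lemma hasDerivAt_sk_zero (r : ℝ) : HasDerivAt (fun κ => sk κ r) (-(r ^ 3 / 6)) 0 := by
  rw [hasDerivAt_iff_isLittleO]
  refine Asymptotics.IsBigO.trans_isLittleO (g := fun κ => (κ - 0) ^ 2) ?_ ?_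
  · refine Asymptotics.IsBigO.of_bound (|r| ^ 5 / 100) ?_
    have hδ : (0 : ℝ) < 1 / (r ^ 2 + 1) := by positivity
    filter_upwards [Metric.ball_mem_nhds 0 hδ] with κ hκ
    rw [Metric.mem_ball, dist_zero_right, Real.norm_eq_abs, lt_div_iff₀ (by positivity)] at hκ
    have hsmall : |κ| * r ^ 2 ≤ 1 := by nlinarith [abs_nonneg κ]
    have := abs_sk_sub_le hsmall
    simp only [sk_zero, sub_zero, smul_eq_mul, Real.norm_eq_abs, norm_pow]
    calc _ = |sk κ r - (r - κ * r ^ 3 / 6)| := by ring_nf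
      _ ≤ _ := this
      _ = _ := by rw [sq_abs]; ring
  · simpa only [sub_zero] using Asymptotics.isLittleO_pow_id (𝕜 := ℝ) one_lt_two

lemma hasDerivAt_sk_neg_mul (K r : ℝ) :
    HasDerivAt (fun ε => sk (-K * ε) r) (K * r ^ 3 / 6) 0 := by
  refine ((hasDerivAt_sk_zero r).comp_of_eq 0 ((hasDerivAt_id 0).const_mul (-K))
    (by simp)).congr_deriv ?_
  ring

lemma hasDerivAt_sk_div_sk (K r : ℝ) {l : ℝ} (hl : l ≠ 0) :
    HasDerivAt (fun ε => sk (-K * ε) r / sk (-K * ε) l) (K * r * (r ^ 2 - l ^ 2) / (6 * l)) 0 := by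
  refine ((hasDerivAt_sk_neg_mul K r).div (hasDerivAt_sk_neg_mul K l)
    (by simpa using hl)).congr_deriv ?_
  simp only [mul_zero, sk_zero]
  field_simp

theorem stmt_17_general (a b K l lam : ℝ) (ha : 0 < a) (hb : 0 < b) (hl : 0 < l) :
    Tendsto
      (fun ε : ℝ =>
        -(1 / ε) * Real.log
          (sk (-K * ε) ((1 - lam) * l) / sk (-K * ε) l * a ^ (-ε) +
            sk (-K * ε) (lam * l) / sk (-K * ε) l * b ^ (-ε)))
      (𝓝[>] (0 : ℝ))
      (𝓝 ((1 - lam) * Real.log a + lam * Real.log b +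
        K / 2 * (1 - lam) * lam * l ^ 2)) := by
  have hF := ((hasDerivAt_sk_div_sk K ((1 - lam) * l) hl.ne').mul (hasDerivAt_rpow_neg ha 0)).add
    ((hasDerivAt_sk_div_sk K (lam * l) hl.ne').mul (hasDerivAt_rpow_neg hb 0))
  have hF0 : sk (-K * 0) ((1 - lam) * l) / sk (-K * 0) l * a ^ (-0 : ℝ) +
      sk (-K * 0) (lam * l) / sk (-K * 0) l * b ^ (-0 : ℝ) = 1 := by
    simp only [mul_zero, sk_zero, neg_zero, Real.rpow_zero]
    field_simp
    ring
  convert tendsto_neg_inv_mul_log_of_hasDerivAt hF hF0 using 2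
  · rfl
  · simp only [mul_zero, sk_zero, neg_zero, Real.rpow_zero]
    field_simp
    ring

/-- The `N = ∞` curvature-dimension inequality is the limit of the finite (negative) `N`
inequalities: with `ε = −1/(N−1) ↓ 0`,
`−ε⁻¹ log[ (s_{−Kε}((1−λ)l)/s_{−Kε}(l)) a^{−ε} + (s_{−Kε}(λl)/s_{−Kε}(l)) b^{−ε} ]`
tends to `(1−λ) log a + λ log b + (K/2)(1−λ)λ l²`. -/
theorem stmt_17 (a b K l lam : ℝ) (ha : 0 < a) (hb : 0 < b) (hl : 0 < l)
    (hlam : lam ∈ Set.Ioo (0 : ℝ) 1) :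
    Tendsto
      (fun ε : ℝ =>
        -(1 / ε) * Real.log
          (sk (-K * ε) ((1 - lam) * l) / sk (-K * ε) l * a ^ (-ε) +
            sk (-K * ε) (lam * l) / sk (-K * ε) l * b ^ (-ε)))
      (𝓝[>] (0 : ℝ))
      (𝓝 ((1 - lam) * Real.log a + lam * Real.log b +
        K / 2 * (1 - lam) * lam * l ^ 2)) :=
  stmt_17_general a b K l lam ha hb hl
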